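/- Let X be a topological space equipped with cell data (P, ε, σ ↦ U_σ) satisfying (P1) and (P2), let F be a sheaf of abelian groups on X, and let I_F be its Godement sheaf. Then for every i ≥ 0 there is an isomorphism of abelian groups Ȟ^i_P(I_F) ≅ ∏_{x∈X} H^i(K•(P_x, F_x)), induced by the isomorphism of complexes Č•_P(I_F) ≅ ∏_{x∈X} K•(P_x, F_x) that rearranges the products ∏_{|σ|=i} ∏_{x∈U_σ} F_x ≅ ∏_{x∈X} ∏_{σ∈P_x, |σ|=i} F_x. (This is equation (3.8.1) established in the proof of Lemma 3.7 of the paper.) -/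

import Mathlib

open CategoryTheory TopologicalSpace Opposite Function

universe u

/-- Cell data on a topological space `X`: a type of cells with a partial order and
dimension function, an incidence function satisfying the axioms of an incidence function
on a cell complex, and an order-reversing assignment of open sets covering `X`
(conditions (P1) and (P2)). -/
structure CellData (X : Type u) [TopologicalSpace X] : Type (u + 1) where
  /-- the type of cells -/
  P : Type u
  /-- the partial order on cells -/
  [po : PartialOrder P]
  /-- the dimension of each cell -/
  dim : P → ℕ
  /-- the incidence function -/
  eps : P → P → ℤ
  /-- axiom (i): for fixed `σ'` only finitely many `σ` have `eps σ σ' ≠ 0` -/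
  eps_finite : ∀ σ' : P, {σ : P | eps σ σ' ≠ 0}.Finite
  /-- axiom (ii): `eps σ σ' = 0` unless `σ < σ'` and `dim σ' = dim σ + 1` -/
  eps_eq_zero : ∀ σ σ' : P, ¬(σ < σ' ∧ dim σ' = dim σ + 1) → eps σ σ' = 0
  /-- axiom (iii) -/
  eps_comp : ∀ σ σ'' : P, dim σ'' = dim σ + 2 →
    (∑ᶠ σ' : P, eps σ σ' * eps σ' σ'') = 0
  /-- the open set attached to each cell -/
  U : P → Opens X
  /-- condition (P1): the assignment is order reversing -/
  mono : ∀ {σ σ' : P}, σ ≤ σ' → U σ' ≤ U σ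
  /-- condition (P2): the open sets cover `X` -/
  covers : ∀ x : X, ∃ σ : P, x ∈ U σ

attribute [instance] CellData.po

namespace CellData

variable {X : TopCat.{u}} (D : CellData ↥X)

/-- The cells of dimension `i`. -/
abbrev Cells (i : ℕ) : Type u := {σ : D.P // D.dim σ = i}

variable (F : TopCat.Presheaf Ab.{u} X)

/-- The `i`-th term of the reduced Čech complex of the presheaf `F`:
the product of the sections of `F` over the `U σ` for `σ` of dimension `i`. -/
abbrev cochain (i : ℕ) : Type u := ∀ σ : D.Cells i, ↥(F.obj (op (D.U σ.1)))

open scoped Classical in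
/-- For a pair of cells, `eps σ σ'` times the restriction map from `U σ` to `U σ'`
(interpreted as `0` unless `σ ≤ σ'`). -/
noncomputable def pairMap (σ σ' : D.P) :
    ↥(F.obj (op (D.U σ))) →+ ↥(F.obj (op (D.U σ'))) :=
  D.eps σ σ' • (if h : σ ≤ σ' then ((F.map (homOfLE (D.mono h)).op).hom : _ →+ _) else 0)

lemma support_pairMap_finite {i : ℕ} (σ' : D.Cells (i + 1)) (f : D.cochain F i) :
    (Function.support fun σ : D.Cells i => D.pairMap F σ.1 σ'.1 (f σ)).Finite := by
  apply Set.Finite.subset ((D.eps_finite σ'.1).preimage (Set.injOn_of_injective Subtype.val_injective))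
  intro σ hσ
  simp only [Function.mem_support] at hσ
  simp only [Set.mem_preimage, Set.mem_setOf_eq]
  intro hz
  apply hσ
  simp [pairMap, hz]

/-- The differential of the reduced Čech complex. -/
noncomputable def cechDiff (i : ℕ) : D.cochain F i →+ D.cochain F (i + 1) :=
  AddMonoidHom.mk'
    (fun f σ' => ∑ᶠ σ : D.Cells i, D.pairMap F σ.1 σ'.1 (f σ))
    (by
      intro f g
      funext σ'
      have : ∀ σ : D.Cells i, D.pairMap F σ.1 σ'.1 ((f + g) σ)
          = D.pairMap F σ.1 σ'.1 (f σ) + D.pairMap F σ.1 σ'.1 (g σ) := by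
        intro σ
        rw [Pi.add_apply, map_add]
      show (∑ᶠ σ : D.Cells i, D.pairMap F σ.1 σ'.1 ((f + g) σ)) = _
      rw [finsum_congr this,
        finsum_add_distrib (D.support_pairMap_finite F σ' f) (D.support_pairMap_finite F σ' g)]
      rfl)

/-- The cocycles of the reduced Čech complex. -/
noncomputable def cechCocycles (i : ℕ) : AddSubgroup (D.cochain F i) :=
  (D.cechDiff F i).ker

/-- The coboundaries of the reduced Čech complex. -/
noncomputable def cechCoboundaries : (i : ℕ) → AddSubgroup (D.cochain F i)
  | 0 => ⊥
  | (j + 1) => (D.cechDiff F j).range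

/-- The `i`-th reduced Čech cohomology group `Ȟ^i_P(F)`. -/
noncomputable def reducedCechCohomology (i : ℕ) : Type u :=
  ↥(D.cechCocycles F i) ⧸
    ((D.cechCoboundaries F i).addSubgroupOf (D.cechCocycles F i))

noncomputable instance (i : ℕ) : AddCommGroup (D.reducedCechCohomology F i) :=
  QuotientAddGroup.Quotient.addCommGroup _

end CellData

namespace CellData

variable {X : TopCat.{u}} (D : CellData ↥X)

/-- For `x : X`, the cells `σ` of dimension `i` with `x ∈ U σ` (the `i`-cells of `P ₓ`). -/
abbrev KCells (x : ↥X) (i : ℕ) : Type u := {σ : D.P // x ∈ D.U σ ∧ D.dim σ = i}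

/-- The `i`-th term of the complex `K^•(Pₓ, A)`. -/
abbrev KCochain (x : ↥X) (A : Type u) [AddCommGroup A] (i : ℕ) : Type u :=
  D.KCells x i → A

/-- The differential of the complex `K^•(Pₓ, A)`. -/
noncomputable def KDiffFun (x : ↥X) (A : Type u) [AddCommGroup A] (i : ℕ)
    (f : D.KCochain x A i) : D.KCochain x A (i + 1) :=
  fun σ' => ∑ᶠ σ : D.KCells x i, D.eps σ.1 σ'.1 • f σ

/-- Condition (P3'): for every point `x` and every abelian group `A`, the map sending
`a : A` to the constant family in `K⁰(Pₓ, A)` is injective with image exactly the kernel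
of the differential `K⁰(Pₓ, A) → K¹(Pₓ, A)`. -/
def CondP3 : Prop :=
  ∀ (x : ↥X) (A : Type u) [AddCommGroup A],
    Function.Injective (fun (a : A) (_ : D.KCells x 0) => a) ∧
      Set.range (fun (a : A) (_ : D.KCells x 0) => a) =
        {f : D.KCochain x A 0 | D.KDiffFun x A 0 f = 0}

/-- Condition (P4'): for every point `x`, every abelian group `A` and every `i ≥ 1`, the
cohomology of the complex `K^•(Pₓ, A)` in degree `i` vanishes; i.e., every cocycle in
degree `i = j + 1` is a coboundary. -/
def CondP4 : Prop :=
  ∀ (x : ↥X) (A : Type u) [AddCommGroup A] (j : ℕ)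
    (f : D.KCochain x A (j + 1)), D.KDiffFun x A (j + 1) f = 0 →
      ∃ g : D.KCochain x A j, D.KDiffFun x A j g = f

end CellData


namespace CellData

variable {X : TopCat.{u}} (D : CellData ↥X)

lemma support_KDiff_finite (x : ↥X) (A : Type u) [AddCommGroup A] {i : ℕ}
    (σ' : D.KCells x (i + 1)) (f : D.KCochain x A i) :
    (Function.support fun σ : D.KCells x i => D.eps σ.1 σ'.1 • f σ).Finite := by
  apply Set.Finite.subset ((D.eps_finite σ'.1).preimage
    (Set.injOn_of_injective Subtype.val_injective))
  intro σ hσ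
  simp only [Function.mem_support] at hσ
  simp only [Set.mem_preimage, Set.mem_setOf_eq]
  intro hz
  apply hσ
  rw [hz, zero_smul]

/-- The differential of the complex `K^•(Pₓ, A)`, as a homomorphism. -/
noncomputable def KDiff (x : ↥X) (A : Type u) [AddCommGroup A] (i : ℕ) :
    D.KCochain x A i →+ D.KCochain x A (i + 1) :=
  AddMonoidHom.mk' (fun f => D.KDiffFun x A i f)
    (by
      intro f g
      funext σ'
      show (∑ᶠ σ : D.KCells x i, D.eps σ.1 σ'.1 • (f + g) σ) = _
      have : ∀ σ : D.KCells x i, D.eps σ.1 σ'.1 • (f + g) σ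
          = D.eps σ.1 σ'.1 • f σ + D.eps σ.1 σ'.1 • g σ := by
        intro σ
        rw [Pi.add_apply, smul_add]
      rw [finsum_congr this,
        finsum_add_distrib (D.support_KDiff_finite x A σ' f)
          (D.support_KDiff_finite x A σ' g)]
      rfl)

/-- The cocycles of the complex `K^•(Pₓ, A)`. -/
noncomputable def KCocycles (x : ↥X) (A : Type u) [AddCommGroup A] (i : ℕ) :
    AddSubgroup (D.KCochain x A i) :=
  (D.KDiff x A i).ker

/-- The coboundaries of the complex `K^•(Pₓ, A)`. -/
noncomputable def KCoboundaries (x : ↥X) (A : Type u) [AddCommGroup A] :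
    (i : ℕ) → AddSubgroup (D.KCochain x A i)
  | 0 => ⊥
  | (j + 1) => (D.KDiff x A j).range

/-- The `i`-th cohomology group of the complex `K^•(Pₓ, A)`. -/
noncomputable def KCohomology (x : ↥X) (A : Type u) [AddCommGroup A] (i : ℕ) : Type u :=
  ↥(D.KCocycles x A i) ⧸ ((D.KCoboundaries x A i).addSubgroupOf (D.KCocycles x A i))

noncomputable instance (x : ↥X) (A : Type u) [AddCommGroup A] (i : ℕ) :
    AddCommGroup (D.KCohomology x A i) :=
  QuotientAddGroup.Quotient.addCommGroup _

end CellData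

/-! Sections of `I` over `U σ` are families indexed by the points of `U σ`, so regrouping the
double product `∏_σ ∏_{x ∈ U σ}` by points identifies `Č^i_P(I)` with `∏_x K^i(Pₓ, Fₓ)`. The
differentials match because `ε(σ, σ') ≠ 0` forces `σ ≤ σ'`, hence `U σ' ⊆ U σ`: at a point
`x ∈ U σ'` only cells of `Pₓ` contribute. Cohomology then commutes with the product, since
cocycles and coboundaries are both detected pointwise. -/

theorem finsum_comp_of_support_subset_range {α β M : Type*} [AddCommMonoid M] {f : α → M}
    {g : β → α} (hg : Function.Injective g) (hf : support f ⊆ Set.range g) :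
    ∑ᶠ b, f (g b) = ∑ᶠ a, f a := by
  rw [← finsum_mem_range hg, ← finsum_mem_univ f,
    ← finsum_mem_inter_support_eq f Set.univ (Set.range g)
      (by rw [Set.univ_inter, Set.inter_eq_right.mpr hf])]

namespace AddMonoidHom

variable {ι C C' : Type*} {K K' : ι → Type*} [AddCommGroup C] [AddCommGroup C']
  [∀ x, AddCommGroup (K x)] [∀ x, AddCommGroup (K' x)]
  {η : C ≃+ ∀ x, K x} {η' : C' ≃+ ∀ x, K' x} {d : C →+ C'} {δ : ∀ x, K x →+ K' x}

theorem mem_ker_iff_forall_mem_ker (h : ∀ f x, η' (d f) x = δ x (η f x)) (f : C) :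
    f ∈ d.ker ↔ ∀ x, η f x ∈ (δ x).ker := by
  simp only [mem_ker, ← h, ← funext_iff, ← Pi.zero_def, η'.map_eq_zero_iff]

theorem mem_range_iff_forall_mem_range (h : ∀ f x, η' (d f) x = δ x (η f x)) (f' : C') :
    f' ∈ d.range ↔ ∀ x, η' f' x ∈ (δ x).range := by
  constructor
  · rintro ⟨f, rfl⟩ x
    exact ⟨η f x, (h f x).symm⟩
  · intro hf'
    choose g hg using hf'
    refine ⟨η.symm g, η'.injective (funext fun x => ?_)⟩
    rw [h, η.apply_symm_apply, hg]

end AddMonoidHom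

namespace AddEquiv

variable {ι G : Type*} {K : ι → Type*} [AddCommGroup G] [∀ x, AddCommGroup (K x)]
  (η : G ≃+ ∀ x, K x) {A B : AddSubgroup G} {A' B' : ∀ x, AddSubgroup (K x)}

noncomputable def subquotientPi (hB : ∀ g, g ∈ B ↔ ∀ x, η g x ∈ B' x)
    (hA : ∀ g, g ∈ A ↔ ∀ x, η g x ∈ A' x) :
    B ⧸ A.addSubgroupOf B ≃+ ∀ x, B' x ⧸ (A' x).addSubgroupOf (B' x) :=
  let Φ : B →+ ∀ x, B' x ⧸ (A' x).addSubgroupOf (B' x) :=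
    AddMonoidHom.pi fun x => (QuotientAddGroup.mk' _).comp <|
      (((Pi.evalAddMonoidHom K x).comp η.toAddMonoidHom).comp B.subtype).codRestrict (B' x)
        fun b => (hB b).1 b.2 x
  have hΦ_apply (b : B) (x : ι) : Φ b x = QuotientAddGroup.mk ⟨η b x, (hB b).1 b.2 x⟩ := rfl
  have hΦ : Surjective Φ := by
    intro c
    choose b hb using fun x => QuotientAddGroup.mk'_surjective _ (c x)
    have hmem : η.symm (fun x => (b x : K x)) ∈ B := (hB _).2 fun x => by simp
    refine ⟨⟨_, hmem⟩, funext fun x => ?_⟩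
    rw [← hb x, hΦ_apply]
    congr 1
    exact Subtype.ext (by simp)
  have hker : A.addSubgroupOf B = Φ.ker := by
    ext b
    simp only [AddSubgroup.mem_addSubgroupOf, hA, AddMonoidHom.mem_ker, funext_iff, hΦ_apply,
      Pi.zero_apply, QuotientAddGroup.eq_zero_iff]
  (QuotientAddGroup.quotientAddEquivOfEq hker).trans
    (QuotientAddGroup.quotientKerEquivOfSurjective Φ hΦ)

end AddEquiv

namespace CellData

variable {X : TopCat.{u}} (D : CellData ↥X)

theorem le_of_eps_ne_zero {σ σ' : D.P} (h : D.eps σ σ' ≠ 0) : σ ≤ σ' :=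
  (not_not.mp fun hc => h (D.eps_eq_zero σ σ' hc)).1.le

theorem mem_U_of_eps_ne_zero {σ σ' : D.P} (h : D.eps σ σ' ≠ 0) {x : ↥X} (hx : x ∈ D.U σ') :
    x ∈ D.U σ :=
  D.mono (D.le_of_eps_ne_zero h) hx

theorem pairMap_of_eps_eq_zero (F : TopCat.Presheaf Ab.{u} X) {σ σ' : D.P}
    (h : D.eps σ σ' = 0) : D.pairMap F σ σ' = 0 := by
  rw [pairMap, h, zero_smul]

variable {A : ↥X → Type u} [∀ x, AddCommGroup (A x)] (I : TopCat.Presheaf Ab.{u} X)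
  (e : ∀ U : Opens ↥X, ↥(I.obj (op U)) ≃+ ∀ x : ↥U, A x)

noncomputable def cochainEquivPi (i : ℕ) : D.cochain I i ≃+ ∀ x, D.KCochain x (A x) i where
  toFun f x σ := e (D.U σ.1) (f ⟨σ.1, σ.2.2⟩) ⟨x, σ.2.1⟩
  invFun g σ := (e (D.U σ.1)).symm fun y => g y.1 ⟨σ.1, y.2, σ.2⟩
  left_inv f := funext fun σ => (e (D.U σ.1)).symm_apply_apply (f σ)
  right_inv g := funext fun x => funext fun σ =>
    congrFun ((e (D.U σ.1)).apply_symm_apply fun y => g y.1 ⟨σ.1, y.2, σ.2.2⟩) ⟨x, σ.2.1⟩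
  map_add' f g := by
    funext x σ
    simp

variable {I e}
variable (he : ∀ (V U : Opens ↥X) (h : V ≤ U) (s : ↥(I.obj (op U))) (x : ↥V),
  e V (I.map (homOfLE h).op s) x = e U s ⟨x.1, h x.2⟩)
include he

theorem apply_pairMap {σ σ' : D.P} {x : ↥X} (hx' : x ∈ D.U σ') (hx : x ∈ D.U σ)
    (s : ↥(I.obj (op (D.U σ)))) :
    e (D.U σ') (D.pairMap I σ σ' s) ⟨x, hx'⟩ = D.eps σ σ' • e (D.U σ) s ⟨x, hx⟩ := by
  by_cases h0 : D.eps σ σ' = 0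
  · simp [D.pairMap_of_eps_eq_zero I h0, h0]
  · have hle := D.le_of_eps_ne_zero h0
    rw [pairMap, dif_pos hle, AddMonoidHom.smul_apply, map_zsmul, Pi.smul_apply]
    exact congrArg _ (he _ _ (D.mono hle) s ⟨x, hx'⟩)

theorem cochainEquivPi_cechDiff (i : ℕ) (f : D.cochain I i) (x : ↥X) :
    D.cochainEquivPi I e (i + 1) (D.cechDiff I i f) x =
      D.KDiffFun x (A x) i (D.cochainEquivPi I e i f x) := by
  funext σ'
  have hx' : x ∈ D.U σ'.1 := σ'.2.1
  let evalAt : ↥(I.obj (op (D.U σ'.1))) →+ A x :=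
    (Pi.evalAddMonoidHom _ ⟨x, hx'⟩).comp (e (D.U σ'.1)).toAddMonoidHom
  let term (σ : D.Cells i) : A x := evalAt (D.pairMap I σ.1 σ'.1 (f σ))
  let incl (τ : D.KCells x i) : D.Cells i := ⟨τ.1, τ.2.2⟩
  have hincl : Function.Injective incl := fun _ _ hab =>
    Subtype.ext (congrArg (Subtype.val : D.Cells i → D.P) hab)
  -- only cells of `Pₓ` can have a nonzero incidence with `σ'`, since `x ∈ U σ'`
  have hsupp : support term ⊆ Set.range incl := by
    intro σ hσ
    have h0 : D.eps σ.1 σ'.1 ≠ 0 := fun h0 => hσ (by simp [term, D.pairMap_of_eps_eq_zero I h0])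
    exact ⟨⟨σ.1, D.mem_U_of_eps_ne_zero h0 hx', σ.2⟩, rfl⟩
  calc evalAt (∑ᶠ σ : D.Cells i, D.pairMap I σ.1 σ'.1 (f σ))
      = ∑ᶠ σ, term σ := evalAt.map_finsum (D.support_pairMap_finite I ⟨σ'.1, σ'.2.2⟩ f)
    _ = ∑ᶠ τ, term (incl τ) := (finsum_comp_of_support_subset_range hincl hsupp).symm
    _ = _ := finsum_congr fun τ => D.apply_pairMap he hx' τ.2.1 _

theorem mem_cechCocycles_iff (i : ℕ) (f : D.cochain I i) :
    f ∈ D.cechCocycles I i ↔ ∀ x, D.cochainEquivPi I e i f x ∈ D.KCocycles x (A x) i :=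
  AddMonoidHom.mem_ker_iff_forall_mem_ker (D.cochainEquivPi_cechDiff he i) f

theorem mem_cechCoboundaries_iff :
    ∀ (i : ℕ) (f : D.cochain I i),
      f ∈ D.cechCoboundaries I i ↔ ∀ x, D.cochainEquivPi I e i f x ∈ D.KCoboundaries x (A x) i
  | 0, f => by
    simp only [cechCoboundaries, KCoboundaries, AddSubgroup.mem_bot, ← funext_iff,
      ← Pi.zero_def, AddEquiv.map_eq_zero_iff]
  | j + 1, f => AddMonoidHom.mem_range_iff_forall_mem_range (D.cochainEquivPi_cechDiff he j) f

end CellData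

/-- equation (3.8.1): let `X` carry cell data satisfying (P1) and (P2), let
`F` be a sheaf of abelian groups on `X` and let `I` be its Godement sheaf (a sheaf whose
sections over each open `U` are identified with `∏_{x ∈ U} Fₓ`, compatibly with
restriction).  Then there is an isomorphism of cochain complexes
`Č^•_P(I) ≅ ∏_{x ∈ X} K^•(Pₓ, Fₓ)` (rearranging the products), and hence for every
`i ≥ 0` an isomorphism of abelian groups `Ȟ^i_P(I) ≅ ∏_{x ∈ X} H^i(K^•(Pₓ, Fₓ))`. -/
theorem stmt9 (X : TopCat.{u}) (D : CellData ↥X)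
    (F : TopCat.Sheaf Ab.{u} X)
    (I : TopCat.Sheaf Ab.{u} X)
    (e : ∀ U : Opens ↥X,
      ↥(I.val.obj (op U)) ≃+ ∀ x : ↥U, ↥(TopCat.Presheaf.stalk F.val x.1))
    (he : ∀ (V U : Opens ↥X) (h : V ≤ U) (s : ↥(I.val.obj (op U))) (x : ↥V),
      e V (I.val.map (homOfLE h).op s) x = e U s ⟨x.1, h x.2⟩) :
    (∃ η : ∀ i : ℕ, D.cochain I.val i ≃+
        (∀ x : ↥X, D.KCochain x ↥(TopCat.Presheaf.stalk F.val x) i),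
      ∀ (i : ℕ) (f : D.cochain I.val i) (x : ↥X),
        η (i + 1) (D.cechDiff I.val i f) x =
          D.KDiffFun x ↥(TopCat.Presheaf.stalk F.val x) i (η i f x)) ∧
    ∀ i : ℕ, Nonempty (D.reducedCechCohomology I.val i ≃+
      ∀ x : ↥X, D.KCohomology x ↥(TopCat.Presheaf.stalk F.val x) i) :=
  ⟨⟨D.cochainEquivPi I.val e, D.cochainEquivPi_cechDiff he⟩, fun i =>
    ⟨(D.cochainEquivPi I.val e i).subquotientPi (D.mem_cechCocycles_iff he i)
      (D.mem_cechCoboundaries_iff he i)⟩⟩
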